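/- (Proposition 3, weighted moments of the truncated multivariate Student's-t.) Let ν > 0, μ ∈ ℝ^p, Σ positive definite, r ∈ ℝ with ν + 2r > 0, and set Σ* = νΣ/(ν+2r) and c_p(ν,r) = ((ν+p)/ν)^r · Γ((p+ν)/2)Γ((ν+2r)/2)/(Γ(ν/2)Γ((p+ν+2r)/2)). Then for every Borel set A ⊆ ℝ^p and every Borel function f : ℝ^p → ℝ such that f(·)·t_p(·|μ,Σ*,ν+2r) is integrable on A, ∫_A ((ν+p)/(ν+δ(x)))^r f(x) t_p(x|μ,Σ,ν) dx = c_p(ν,r) · ∫_A f(x) t_p(x|μ,Σ*,ν+2r) dx. In particular, taking A = {x : a ≤ x ≤ b} a rectangle and f(x) equal to 1, the coordinates of x, or products of pairs of coordinates of x, one obtains: if Y ∼ t_p(μ,Σ,ν) truncated to (a,b), then E[((ν+p)/(ν+δ(Y)))^r Y^{(k)}] = c_p(ν,r) · (T_p(a,b;μ,Σ*,ν+2r)/T_p(a,b;μ,Σ,ν)) · E[W^{(k)}] for k = 0,1,2, where W ∼ t_p(μ,Σ*,ν+2r) truncated to (a,b). -/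

import Mathlib

open MeasureTheory Matrix Real Filter

/-- Squared Mahalanobis distance δ(x) = (x−μ)ᵀ S⁻¹ (x−μ). -/
noncomputable def mahalanobis {n : Type*} [Fintype n] [DecidableEq n]
    (μ : n → ℝ) (S : Matrix n n ℝ) (x : n → ℝ) : ℝ :=
  (x - μ) ⬝ᵥ (S⁻¹ *ᵥ (x - μ))

/-- The multivariate Student's-t density t_p(x|μ,S,ν). -/
noncomputable def tPdf {n : Type*} [Fintype n] [DecidableEq n]
    (μ : n → ℝ) (S : Matrix n n ℝ) (ν : ℝ) (x : n → ℝ) : ℝ :=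
  Real.Gamma (((Fintype.card n : ℝ) + ν) / 2) /
      (Real.Gamma (ν / 2) * Real.pi ^ ((Fintype.card n : ℝ) / 2) *
        ν ^ ((Fintype.card n : ℝ) / 2)) *
    S.det ^ (-(1 : ℝ) / 2) *
    (1 + mahalanobis μ S x / ν) ^ (-(((Fintype.card n : ℝ) + ν) / 2))

/-- The multivariate normal density φ_p(x|μ,S). -/
noncomputable def normalPdf {n : Type*} [Fintype n] [DecidableEq n]
    (μ : n → ℝ) (S : Matrix n n ℝ) (x : n → ℝ) : ℝ :=
  (2 * Real.pi) ^ (-(Fintype.card n : ℝ) / 2) * S.det ^ (-(1 : ℝ) / 2) *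
    Real.exp (-(mahalanobis μ S x) / 2)

/-- The Gamma(a,b) density h(u|a,b) (for u > 0). -/
noncomputable def gammaPdf (a b u : ℝ) : ℝ :=
  b ^ a / Real.Gamma a * u ^ (a - 1) * Real.exp (-(b * u))

/-- Standard normal pdf. -/
noncomputable def stdNormalPdf (x : ℝ) : ℝ :=
  (Real.sqrt (2 * Real.pi))⁻¹ * Real.exp (-(x ^ 2) / 2)

/-- Standard normal cdf. -/
noncomputable def stdNormalCdf (x : ℝ) : ℝ :=
  ∫ t in Set.Iic x, stdNormalPdf t

/-- Univariate Student's-t density with location c, scale s², κ degrees of freedom. -/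
noncomputable def tPdf1 (c s2 κ y : ℝ) : ℝ :=
  Real.Gamma ((1 + κ) / 2) /
      (Real.Gamma (κ / 2) * Real.sqrt (Real.pi * κ) * Real.sqrt s2) *
    (1 + (y - c) ^ 2 / (κ * s2)) ^ (-((1 + κ) / 2))

/-! The identity holds pointwise, before integrating. Put `t = 1 + δ(x)/ν`. The weight is
`((ν+p)/(ν+δ(x)))^r = ((ν+p)/ν)^r t^(-r)`, and rescaling `Σ` to `Σ* = νΣ/(ν+2r)` makes the quadratic
form of `t_p(·|μ,Σ*,ν+2r)` equal to `t` again, while `det Σ*` contributes `(ν/(ν+2r))^(p/2)`, which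
turns the normaliser's `(ν+2r)^(p/2)` into `ν^(p/2)`. So both integrands are multiples of
`f(x) t^(-(p+ν+2r)/2)`, and the ratio of the multiples is `c_p(ν,r)`. -/

/-- The constant `c_p(ν, r)`. -/
noncomputable def tWeightConst (p ν r : ℝ) : ℝ :=
  ((ν + p) / ν) ^ r *
    (Real.Gamma ((p + ν) / 2) * Real.Gamma ((ν + 2 * r) / 2) /
      (Real.Gamma (ν / 2) * Real.Gamma ((p + ν + 2 * r) / 2)))

section

variable {n : Type*} [Fintype n] [DecidableEq n]

theorem mahalanobis_nonneg {S : Matrix n n ℝ} (hS : S.PosDef) (μ x : n → ℝ) :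
    0 ≤ mahalanobis μ S x :=
  hS.inv.posSemidef.dotProduct_mulVec_nonneg (x - μ)

theorem mahalanobis_smul {c : ℝ} (hc : c ≠ 0) {S : Matrix n n ℝ} (hS : IsUnit S.det)
    (μ x : n → ℝ) : mahalanobis μ (c • S) x = c⁻¹ * mahalanobis μ S x := by
  have : Invertible c := invertibleOfNonzero hc
  have : (c • S)⁻¹ = c⁻¹ • S⁻¹ := by rw [Matrix.inv_smul S c hS, invOf_eq_inv]
  rw [mahalanobis, mahalanobis, this, Matrix.smul_mulVec, dotProduct_smul, smul_eq_mul]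

theorem det_smul_rpow_neg_half {c : ℝ} (hc : 0 < c) {S : Matrix n n ℝ} (hS : 0 ≤ S.det) :
    (c • S).det ^ (-(1 : ℝ) / 2) =
      (c ^ ((Fintype.card n : ℝ) / 2))⁻¹ * S.det ^ (-(1 : ℝ) / 2) := by
  rw [Matrix.det_smul, Real.mul_rpow (by positivity) hS, ← Real.rpow_natCast,
    ← Real.rpow_mul hc.le, ← Real.rpow_neg hc.le]
  ring_nf

theorem tPdf_smul_div {ν κ : ℝ} (hν : 0 < ν) (hκ : 0 < κ) {S : Matrix n n ℝ} (hS : S.PosDef)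
    (μ x : n → ℝ) :
    tPdf μ ((ν / κ) • S) κ x =
      Real.Gamma (((Fintype.card n : ℝ) + κ) / 2) /
          (Real.Gamma (κ / 2) * Real.pi ^ ((Fintype.card n : ℝ) / 2) *
            ν ^ ((Fintype.card n : ℝ) / 2)) *
        S.det ^ (-(1 : ℝ) / 2) *
        (1 + mahalanobis μ S x / ν) ^ (-(((Fintype.card n : ℝ) + κ) / 2)) := by
  have hνκ : 0 < ν / κ := div_pos hν hκ
  have hscale : κ ^ ((Fintype.card n : ℝ) / 2) * (ν / κ) ^ ((Fintype.card n : ℝ) / 2) =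
      ν ^ ((Fintype.card n : ℝ) / 2) := by
    rw [← Real.mul_rpow hκ.le hνκ.le, mul_div_cancel₀ _ hκ.ne']
  have hquad : 1 + mahalanobis μ ((ν / κ) • S) x / κ = 1 + mahalanobis μ S x / ν := by
    rw [mahalanobis_smul hνκ.ne' hS.det_pos.ne'.isUnit μ x]
    field_simp
  rw [tPdf, det_smul_rpow_neg_half hνκ hS.det_pos.le, hquad, ← hscale]
  field_simp

theorem rpow_div_add_mahalanobis_mul_tPdf {ν r : ℝ} (hν : 0 < ν) (hr : 0 < ν + 2 * r)
    {S : Matrix n n ℝ} (hS : S.PosDef) (μ x : n → ℝ) :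
    ((ν + Fintype.card n) / (ν + mahalanobis μ S x)) ^ r * tPdf μ S ν x =
      tWeightConst (Fintype.card n) ν r * tPdf μ ((ν / (ν + 2 * r)) • S) (ν + 2 * r) x := by
  have hδ := mahalanobis_nonneg hS μ x
  have hd : (0 : ℝ) ≤ Fintype.card n := Nat.cast_nonneg _
  rw [tPdf_smul_div hν hr hS, tPdf, tWeightConst]
  generalize mahalanobis μ S x = δ at *
  generalize (Fintype.card n : ℝ) = d at *
  have ht : 0 < 1 + δ / ν := by positivity
  have hweight : ((ν + d) / (ν + δ)) ^ r = ((ν + d) / ν) ^ r * (1 + δ / ν) ^ (-r) := by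
    rw [show ν + δ = ν * (1 + δ / ν) by field_simp, ← div_div,
      Real.div_rpow (by positivity) ht.le, Real.rpow_neg ht.le, div_eq_mul_inv]
  have hpow : (1 + δ / ν) ^ (-r) * (1 + δ / ν) ^ (-((d + ν) / 2)) =
      (1 + δ / ν) ^ (-((d + (ν + 2 * r)) / 2)) := by
    rw [← Real.rpow_add ht]; ring_nf
  have hΓν : 0 < Real.Gamma (ν / 2) := Real.Gamma_pos_of_pos (by positivity)
  have hΓr : 0 < Real.Gamma ((ν + 2 * r) / 2) := Real.Gamma_pos_of_pos (by positivity)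
  have hΓ : 0 < Real.Gamma ((d + ν + 2 * r) / 2) := Real.Gamma_pos_of_pos (by linarith)
  rw [hweight, ← hpow, ← add_assoc]
  generalize Real.Gamma ((ν + 2 * r) / 2) = g at hΓr ⊢
  generalize Real.Gamma ((d + ν + 2 * r) / 2) = g' at hΓ ⊢
  field_simp

end

theorem tPdf_weighted_moments_general {p : ℕ} (ν r : ℝ) (hν : 0 < ν) (hr : 0 < ν + 2 * r)
    (μ : Fin p → ℝ) (S : Matrix (Fin p) (Fin p) ℝ) (hS : S.PosDef)
    (A : Set (Fin p → ℝ))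
    (f : (Fin p → ℝ) → ℝ) :
    ∫ x in A, ((ν + (p : ℝ)) / (ν + mahalanobis μ S x)) ^ r * f x * tPdf μ S ν x
      = ((ν + (p : ℝ)) / ν) ^ r *
          (Real.Gamma (((p : ℝ) + ν) / 2) * Real.Gamma ((ν + 2 * r) / 2) /
            (Real.Gamma (ν / 2) * Real.Gamma (((p : ℝ) + ν + 2 * r) / 2))) *
        ∫ x in A, f x * tPdf μ ((ν / (ν + 2 * r)) • S) (ν + 2 * r) x := by
  have hpointwise (x : Fin p → ℝ) :
      ((ν + (p : ℝ)) / (ν + mahalanobis μ S x)) ^ r * f x * tPdf μ S ν x =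
        tWeightConst p ν r * (f x * tPdf μ ((ν / (ν + 2 * r)) • S) (ν + 2 * r) x) := by
    have := rpow_div_add_mahalanobis_mul_tPdf hν hr hS μ x
    rw [Fintype.card_fin] at this
    linear_combination f x * this
  simp_rw [hpointwise]
  rw [integral_const_mul, tWeightConst]

/-- Proposition 3: weighted moments of the truncated multivariate Student's-t. -/
theorem tPdf_weighted_moments {p : ℕ} (ν r : ℝ) (hν : 0 < ν) (hr : 0 < ν + 2 * r)
    (μ : Fin p → ℝ) (S : Matrix (Fin p) (Fin p) ℝ) (hS : S.PosDef)
    (A : Set (Fin p → ℝ)) (hA : MeasurableSet A)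
    (f : (Fin p → ℝ) → ℝ) (hfm : Measurable f)
    (hfi : IntegrableOn (fun x => f x * tPdf μ ((ν / (ν + 2 * r)) • S) (ν + 2 * r) x) A) :
    ∫ x in A, ((ν + (p : ℝ)) / (ν + mahalanobis μ S x)) ^ r * f x * tPdf μ S ν x
      = ((ν + (p : ℝ)) / ν) ^ r *
          (Real.Gamma (((p : ℝ) + ν) / 2) * Real.Gamma ((ν + 2 * r) / 2) /
            (Real.Gamma (ν / 2) * Real.Gamma (((p : ℝ) + ν + 2 * r) / 2))) *
        ∫ x in A, f x * tPdf μ ((ν / (ν + 2 * r)) • S) (ν + 2 * r) x :=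
  tPdf_weighted_moments_general ν r hν hr μ S hS A f
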